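/- Let B be an SSD space and let f : B → ℝ ∪ {+∞} be a minimal element of the set of convex functions minorized by q; that is, f is convex with f ≥ q on B, and every convex function g : B → ℝ ∪ {+∞} with q ≤ g ≤ f on B equals f. Then f^@(x) ≥ f(x) for all x ∈ B. -/

import Mathlib

noncomputable section

variable {B : Type*} [AddCommGroup B] [Module ℝ B]

/-- The quadratic form `q(x) = ½⌊x,x⌋` associated to the bilinear form `br`. -/
def qQ (br : B →ₗ[ℝ] B →ₗ[ℝ] ℝ) (x : B) : ℝ := (1 / 2) * br x x

/-- `A` is `q`-positive: nonempty and `q(b - c) ≥ 0` for all `b, c ∈ A`. -/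
def IsQPositive (br : B →ₗ[ℝ] B →ₗ[ℝ] ℝ) (A : Set B) : Prop :=
  A.Nonempty ∧ ∀ b ∈ A, ∀ c ∈ A, 0 ≤ qQ br (b - c)

/-- `A^π`, the set of points `q`-positively related to `A`. -/
def qPi (br : B →ₗ[ℝ] B →ₗ[ℝ] ℝ) (A : Set B) : Set B :=
  {b : B | ∀ a ∈ A, 0 ≤ qQ br (b - a)}

/-- `A` is maximally `q`-positive. -/
def IsMaxQPositive (br : B →ₗ[ℝ] B →ₗ[ℝ] ℝ) (A : Set B) : Prop :=
  IsQPositive br A ∧ ∀ C : Set B, IsQPositive br C → A ⊆ C → C = A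

/-- The generalized Fitzpatrick function `Φ_A(x) = sup_{a ∈ A} (⌊x,a⌋ - q(a))`. -/
def PhiF (br : B →ₗ[ℝ] B →ₗ[ℝ] ℝ) (A : Set B) (x : B) : EReal :=
  ⨆ a ∈ A, ((br x a - qQ br a : ℝ) : EReal)

/-- The intrinsic conjugate `f^@(b) = sup_{c ∈ B} (⌊c,b⌋ - f(c))`. -/
def intrinsicConj (br : B →ₗ[ℝ] B →ₗ[ℝ] ℝ) (f : B → EReal) (b : B) : EReal :=
  ⨆ c : B, ((br c b : ℝ) : EReal) - f c

/-- `P_q(f) = {b : f(b) = q(b)}`. -/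
def PqSet (br : B →ₗ[ℝ] B →ₗ[ℝ] ℝ) (f : B → EReal) : Set B :=
  {b : B | f b = ((qQ br b : ℝ) : EReal)}

/-- `G_f = {b : f(b) + f^@(b) = ⌊b,b⌋}`. -/
def GSet (br : B →ₗ[ℝ] B →ₗ[ℝ] ℝ) (f : B → EReal) : Set B :=
  {b : B | f b + intrinsicConj br f b = ((br b b : ℝ) : EReal)}

/-- Convexity for `ℝ ∪ {+∞}`-valued functions. -/
def ConvexE (f : B → EReal) : Prop :=
  ∀ x y : B, ∀ α β : ℝ, 0 ≤ α → 0 ≤ β → α + β = 1 →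
    f (α • x + β • y) ≤ (α : EReal) * f x + (β : EReal) * f y

/-- The weak topology `w(B,B)` induced by the functionals `⌊·,b⌋`, `b ∈ B`. -/
def weakTop (br : B →ₗ[ℝ] B →ₗ[ℝ] ℝ) : TopologicalSpace B :=
  ⨅ b : B, TopologicalSpace.induced (fun x => br x b) inferInstance

/-- Lower semicontinuity with respect to the weak topology `w(B,B)`. -/
def LscW (br : B →ₗ[ℝ] B →ₗ[ℝ] ℝ) (f : B → EReal) : Prop :=
  @LowerSemicontinuous B EReal (weakTop br) _ f

/-- `A` is `q`-representable: it has a `w(B,B)`-lsc proper convex `q`-representation. -/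
def IsQRepresentable (br : B →ₗ[ℝ] B →ₗ[ℝ] ℝ) (A : Set B) : Prop :=
  ∃ f : B → EReal, LscW br f ∧ ConvexE f ∧ (∃ x, f x ≠ ⊤) ∧
    (∀ x, ((qQ br x : ℝ) : EReal) ≤ f x) ∧ PqSet br f = A

/-!
Fix `x₀` and a real `m ≥ max (q x₀) (f^@ x₀)`. Adjoin `(x₀, m)` to the epigraph of `f` and let `g`
be the lower envelope of the convex hull: `g` is convex and `g ≤ f`. It still lies above `q`: for
`f y ≤ r` and `a + b = 1`, since `⌊y, x₀⌋ ≤ f^@ x₀ + f y ≤ m + r`,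
`q (a x₀ + b y) = a² q x₀ + a b ⌊x₀, y⌋ + b² q y ≤ a² m + a b (m + r) + b² r = a m + b r`.
Minimality forces `g = f`, so `f x₀ ≤ g x₀ ≤ m`. Hence `f x₀ ≤ max (q x₀) (f^@ x₀)`, and when the
maximum is `q x₀` we still get `f^@ x₀ ≥ ⌊x₀, x₀⌋ - f x₀ ≥ q x₀ ≥ f x₀`.
-/

section LowerEnvelope

variable {E : Type*}

def epiReal (f : E → EReal) : Set (E × ℝ) := {p | f p.1 ≤ p.2}

def lowerEnvelope (C : Set (E × ℝ)) (z : E) : EReal := ⨅ (r : ℝ) (_ : (z, r) ∈ C), (r : EReal)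

variable {C : Set (E × ℝ)} {z : E}

theorem lowerEnvelope_le {r : ℝ} (h : (z, r) ∈ C) : lowerEnvelope C z ≤ r :=
  iInf₂_le r h

theorem le_lowerEnvelope {a : EReal} (h : ∀ r : ℝ, (z, r) ∈ C → a ≤ r) :
    a ≤ lowerEnvelope C z :=
  le_iInf₂ h

theorem lowerEnvelope_le_of_epiReal_subset {f : E → EReal} (h : epiReal f ⊆ C) (z : E) :
    lowerEnvelope C z ≤ f z :=
  EReal.le_of_forall_lt_iff_le.1 fun _ hr => lowerEnvelope_le (h hr.le)

end LowerEnvelope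

theorem ConvexE.convex_epiReal {f : B → EReal} (hf : ConvexE f) : Convex ℝ (epiReal f) := by
  rintro ⟨x, s⟩ hx ⟨y, t⟩ hy α β hα hβ hαβ
  calc f (α • x + β • y) ≤ (α : EReal) * f x + (β : EReal) * f y := hf x y α β hα hβ hαβ
    _ ≤ (α : EReal) * s + (β : EReal) * t :=
      add_le_add (mul_le_mul_of_nonneg_left hx (mod_cast hα))
        (mul_le_mul_of_nonneg_left hy (mod_cast hβ))
    _ = ((α • (x, s) + β • (y, t)).2 : ℝ) := by simp

theorem convexE_of_lt {g : B → EReal} (hbot : ∀ z, g z ≠ ⊥)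
    (h : ∀ x y : B, ∀ α β : ℝ, 0 < α → 0 < β → α + β = 1 → ∀ s t : ℝ, g x < s → g y < t →
      g (α • x + β • y) ≤ α * s + β * t) : ConvexE g := by
  intro x y α β hα hβ hαβ
  rcases hα.eq_or_lt with rfl | hα
  · obtain rfl : β = 1 := by linarith
    simp
  rcases hβ.eq_or_lt with rfl | hβ
  · obtain rfl : α = 1 := by linarith
    simp
  have hmul_ne_bot : ∀ (c : ℝ) z, 0 < c → (c : EReal) * g z ≠ ⊥ := fun c z hc =>
    (EReal.mul_ne_bot _ _).2 ⟨.inl (EReal.coe_ne_bot c), .inr (hbot z),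
      .inl (EReal.coe_ne_top c), .inl (mod_cast hc.le)⟩
  rcases eq_or_ne (g x) ⊤ with hx | hx
  · rw [hx, EReal.coe_mul_top_of_pos hα, EReal.top_add_of_ne_bot (hmul_ne_bot β y hβ)]
    exact le_top
  rcases eq_or_ne (g y) ⊤ with hy | hy
  · rw [hy, EReal.coe_mul_top_of_pos hβ, EReal.add_top_of_ne_bot (hmul_ne_bot α x hα)]
    exact le_top
  obtain ⟨a, ha⟩ : ∃ a : ℝ, g x = a := ⟨_, (EReal.coe_toReal hx (hbot x)).symm⟩
  obtain ⟨b, hb⟩ : ∃ b : ℝ, g y = b := ⟨_, (EReal.coe_toReal hy (hbot y)).symm⟩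
  rw [ha, hb]
  refine EReal.le_of_forall_lt_iff_le.1 fun z hz => ?_
  have hz : α * a + β * b < z := by exact_mod_cast hz
  set ε := z - (α * a + β * b)
  calc g (α • x + β • y) ≤ α * (a + ε : ℝ) + β * (b + ε : ℝ) :=
        h x y α β hα hβ hαβ _ _ (by rw [ha]; exact_mod_cast (by linarith))
          (by rw [hb]; exact_mod_cast (by linarith))
    _ = z := by norm_cast; linear_combination ε * hαβ

theorem Convex.convexE_lowerEnvelope {C : Set (B × ℝ)} (hC : Convex ℝ C)
    (hbot : ∀ z, lowerEnvelope C z ≠ ⊥) : ConvexE (lowerEnvelope C) := by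
  refine convexE_of_lt hbot fun x y α β hα hβ hαβ s t hs ht => ?_
  obtain ⟨s', hs'C, hs'⟩ : ∃ s' : ℝ, (x, s') ∈ C ∧ s' < s := by
    simpa [lowerEnvelope, iInf_lt_iff] using hs
  obtain ⟨t', ht'C, ht'⟩ : ∃ t' : ℝ, (y, t') ∈ C ∧ t' < t := by
    simpa [lowerEnvelope, iInf_lt_iff] using ht
  have hmem : (α • x + β • y, α * s' + β * t') ∈ C := by
    simpa using hC hs'C ht'C hα.le hβ.le hαβ
  calc lowerEnvelope C (α • x + β • y) ≤ (α * s' + β * t' : ℝ) := lowerEnvelope_le hmem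
    _ ≤ α * s + β * t := mod_cast (by gcongr : α * s' + β * t' ≤ α * s + β * t)

theorem qQ_smul_add_smul_le {br : B →ₗ[ℝ] B →ₗ[ℝ] ℝ} (hsym : ∀ x y : B, br x y = br y x)
    {x y : B} {s t a b : ℝ} (ha : 0 ≤ a) (hb : 0 ≤ b) (hab : a + b = 1)
    (hx : qQ br x ≤ s) (hy : qQ br y ≤ t) (hxy : br x y ≤ s + t) :
    qQ br (a • x + b • y) ≤ a * s + b * t := by
  have hexpand : qQ br (a • x + b • y) = a ^ 2 * qQ br x + a * b * br x y + b ^ 2 * qQ br y := by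
    simp only [qQ, map_add, map_smul, LinearMap.add_apply, LinearMap.smul_apply, smul_eq_mul,
      hsym y x]
    ring
  have hsum : a * s + b * t = a ^ 2 * s + a * b * (s + t) + b ^ 2 * t := by
    linear_combination (-(a * s) - b * t) * hab
  rw [hexpand, hsum]
  gcongr

theorem sub_le_intrinsicConj (br : B →ₗ[ℝ] B →ₗ[ℝ] ℝ) (f : B → EReal) (x y : B) :
    ((br y x : ℝ) : EReal) - f y ≤ intrinsicConj br f x :=
  le_iSup (fun c => ((br c x : ℝ) : EReal) - f c) y

theorem apply_le_add_of_intrinsicConj_le {br : B →ₗ[ℝ] B →ₗ[ℝ] ℝ} {f : B → EReal} {x y : B}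
    {m r : ℝ} (hm : intrinsicConj br f x ≤ m) (hr : f y ≤ r) : br y x ≤ m + r := by
  have h : ((br y x - r : ℝ) : EReal) ≤ m :=
    calc ((br y x - r : ℝ) : EReal) = (br y x : EReal) - r := EReal.coe_sub _ _
      _ ≤ (br y x : EReal) - f y := EReal.sub_le_sub le_rfl hr
      _ ≤ m := (sub_le_intrinsicConj br f x y).trans hm
  linarith [EReal.coe_le_coe_iff.1 h]

theorem qQ_le_of_mem_convexHull_insert {br : B →ₗ[ℝ] B →ₗ[ℝ] ℝ}
    (hsym : ∀ x y : B, br x y = br y x) {f : B → EReal} (hconv : ConvexE f)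
    (hq : ∀ x : B, ((qQ br x : ℝ) : EReal) ≤ f x) {x₀ : B} {m : ℝ} (hm : qQ br x₀ ≤ m)
    (hconj : intrinsicConj br f x₀ ≤ m) {p : B × ℝ}
    (hp : p ∈ convexHull ℝ (insert (x₀, m) (epiReal f))) : qQ br p.1 ≤ p.2 := by
  rcases (epiReal f).eq_empty_or_nonempty with hempty | hne
  · rw [hempty, insert_empty_eq, convexHull_singleton, Set.mem_singleton_iff] at hp
    rwa [hp]
  rw [convexHull_insert hne, hconv.convex_epiReal.convexHull_eq, convexJoin_singleton_left,
    Set.mem_iUnion₂] at hp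
  obtain ⟨⟨y, r⟩, hyr, a, b, ha, hb, hab, rfl⟩ := hp
  have hqy : qQ br y ≤ r := EReal.coe_le_coe_iff.1 ((hq y).trans hyr)
  have hxy : br x₀ y ≤ m + r := hsym x₀ y ▸ apply_le_add_of_intrinsicConj_le hconj hyr
  simpa using qQ_smul_add_smul_le hsym ha hb hab hm hqy hxy

theorem apply_le_of_minimal {br : B →ₗ[ℝ] B →ₗ[ℝ] ℝ} (hsym : ∀ x y : B, br x y = br y x)
    {f : B → EReal} (hconv : ConvexE f) (hq : ∀ x : B, ((qQ br x : ℝ) : EReal) ≤ f x)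
    (hmin : ∀ g : B → EReal, ConvexE g →
      (∀ x : B, ((qQ br x : ℝ) : EReal) ≤ g x) → (∀ x : B, g x ≤ f x) → g = f)
    {x₀ : B} {m : ℝ} (hm : qQ br x₀ ≤ m) (hconj : intrinsicConj br f x₀ ≤ m) :
    f x₀ ≤ m := by
  set C := convexHull ℝ (insert (x₀, m) (epiReal f))
  have hqC : ∀ x, ((qQ br x : ℝ) : EReal) ≤ lowerEnvelope C x := fun x =>
    le_lowerEnvelope fun r hr =>
      EReal.coe_le_coe_iff.2 (qQ_le_of_mem_convexHull_insert hsym hconv hq hm hconj hr)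
  have hCf : lowerEnvelope C = f :=
    hmin _ ((convex_convexHull ℝ _).convexE_lowerEnvelope
        fun x => ne_bot_of_le_ne_bot (EReal.coe_ne_bot _) (hqC x)) hqC
      (lowerEnvelope_le_of_epiReal_subset
        ((Set.subset_insert _ _).trans (subset_convexHull ℝ _)))
  rw [← hCf]
  exact lowerEnvelope_le (subset_convexHull ℝ _ (Set.mem_insert _ _))

theorem stmt19_general (br : B →ₗ[ℝ] B →ₗ[ℝ] ℝ)
    (hsym : ∀ x y : B, br x y = br y x)
    (f : B → EReal) (hconv : ConvexE f)
    (hq : ∀ x : B, ((qQ br x : ℝ) : EReal) ≤ f x)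
    (hmin : ∀ g : B → EReal, ConvexE g →
      (∀ x : B, ((qQ br x : ℝ) : EReal) ≤ g x) →
      (∀ x : B, g x ≤ f x) → g = f) :
    ∀ x : B, f x ≤ intrinsicConj br f x := by
  intro x
  set q : EReal := ((qQ br x : ℝ) : EReal)
  have hmax : f x ≤ max q (intrinsicConj br f x) :=
    EReal.le_of_forall_lt_iff_le.1 fun m hm =>
      apply_le_of_minimal hsym hconv hq hmin
        (EReal.coe_le_coe_iff.1 ((le_max_left _ _).trans hm.le)) ((le_max_right _ _).trans hm.le)
  rcases le_total q (intrinsicConj br f x) with hconj | hconj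
  · rwa [max_eq_right hconj] at hmax
  · rw [max_eq_left hconj] at hmax
    calc f x ≤ q := hmax
      _ = ((br x x - qQ br x : ℝ) : EReal) := by simp only [q, qQ]; ring_nf
      _ = (br x x : EReal) - q := EReal.coe_sub _ _
      _ ≤ (br x x : EReal) - f x := EReal.sub_le_sub le_rfl hmax
      _ ≤ intrinsicConj br f x := sub_le_intrinsicConj br f x x

/-- If f is a minimal element of the set of convex functions
minorized by q, then f^@ ≥ f. -/
theorem stmt19 [Nontrivial B] (br : B →ₗ[ℝ] B →ₗ[ℝ] ℝ)
    (hsym : ∀ x y : B, br x y = br y x)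
    (f : B → EReal) (hconv : ConvexE f)
    (hq : ∀ x : B, ((qQ br x : ℝ) : EReal) ≤ f x)
    (hmin : ∀ g : B → EReal, ConvexE g →
      (∀ x : B, ((qQ br x : ℝ) : EReal) ≤ g x) →
      (∀ x : B, g x ≤ f x) → g = f) :
    ∀ x : B, f x ≤ intrinsicConj br f x :=
  stmt19_general br hsym f hconv hq hmin
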